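/- Let E be a Banach space with the Dunford–Pettis property and let M ⊆ E be a closed subspace such that the quotient E/M is infinite-dimensional and reflexive. Then there is no sequence (V_n) of weakly compact operators on E with ‖Q − Q∘V_n‖ → 0, where Q : E → E/M is the quotient map. In particular E fails the inner W.A.P. -/

import Mathlib

open Filter Topology

/-- A set is weakly compact if it is compact in the weak topology. -/
def IsWeaklyCompact {E : Type*} [SeminormedAddCommGroup E] [NormedSpace ℝ E] (D : Set E) :
    Prop :=
  IsCompact (toWeakSpace ℝ E '' D)

/-- An operator is weakly compact if the image of the closed unit ball is relatively
compact in the weak topology. -/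
def IsWeaklyCompactOp {E F : Type*} [SeminormedAddCommGroup E] [NormedSpace ℝ E]
    [SeminormedAddCommGroup F] [NormedSpace ℝ F] (V : E →L[ℝ] F) : Prop :=
  IsCompact (closure (toWeakSpace ℝ F '' (V '' Metric.closedBall 0 1)))

/-- A sequence is weakly null if it tends to `0` in the weak topology. -/
def WeaklyNull {E : Type*} [SeminormedAddCommGroup E] [NormedSpace ℝ E] (x : ℕ → E) : Prop :=
  Tendsto (fun n => toWeakSpace ℝ E (x n)) atTop (nhds 0)

/-- `E` has the Dunford–Pettis property: weakly compact operators out of `E` map weakly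
null sequences to norm-null sequences. -/
def HasDPP (E : Type) [SeminormedAddCommGroup E] [NormedSpace ℝ E] : Prop :=
  ∀ (F : Type) (_ : SeminormedAddCommGroup F), ∀ (_ : NormedSpace ℝ F) (_ : CompleteSpace F),
    ∀ V : E →L[ℝ] F, IsWeaklyCompactOp V →
      ∀ x : ℕ → E, WeaklyNull x → Tendsto (fun n => ‖V (x n)‖) atTop (nhds 0)

/-! Riesz's lemma gives a sequence `xₖ` in the unit ball of `E` whose images `Q xₖ` are uniformly
separated; if `‖Q - Q ∘ V‖` is small, so are the `Q (V xₖ)`. But `V` is weakly compact, so by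
Eberlein–Šmulian a subsequence of `V xₖ` converges weakly, and since `Q` is weakly compact
(`E/M` is reflexive) the Dunford–Pettis property makes `Q (V xₖ)` converge in norm along it. -/

open Metric TopologicalSpace
open scoped Pointwise

section Norming

variable {𝕜 E : Type*} [RCLike 𝕜] [NormedAddCommGroup E] [NormedSpace 𝕜 E]

theorem eq_zero_of_mem_closure_of_norming {c : Set E} {g : E → StrongDual 𝕜 E}
    (hg : ∀ x ∈ c, ‖g x‖ ≤ 1 ∧ g x x = ‖x‖) {z : E} (hz : z ∈ closure c)
    (hgz : ∀ x ∈ c, g x z = 0) : z = 0 := by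
  have hc : c ⊆ {x | ‖z‖ ≤ 2 * dist z x} := by
    intro x hx
    have hx_le : ‖x‖ ≤ ‖z - x‖ :=
      calc ‖x‖ = ‖g x (x - z)‖ := by simp [map_sub, (hg x hx).2, hgz x hx]
        _ ≤ ‖g x‖ * ‖x - z‖ := (g x).le_opNorm _
        _ ≤ ‖z - x‖ := by
          rw [norm_sub_rev]
          exact mul_le_of_le_one_left (norm_nonneg _) (hg x hx).1
    have := norm_le_norm_add_norm_sub' z x
    rw [Set.mem_ofPred_eq, dist_eq_norm]
    linarith
  simpa using closure_minimal hc (isClosed_le continuous_const (by fun_prop)) hz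

theorem TopologicalSpace.IsSeparable.exists_seq_dual_eq_zero {s : Set E} (hs : IsSeparable s) :
    ∃ g : ℕ → StrongDual 𝕜 E, ∀ z ∈ s, (∀ n, g n z = 0) → z = 0 := by
  obtain ⟨c, hc, hsc⟩ := hs
  obtain ⟨d, hd⟩ := (hc.insert 0).exists_eq_range (Set.insert_nonempty _ _)
  choose g hg using fun x : E => exists_dual_vector'' 𝕜 x
  refine ⟨fun n => g (d n), fun z hz hgz =>
    eq_zero_of_mem_closure_of_norming (c := Set.range d) (fun x _ => hg x) ?_ ?_⟩
  · exact closure_mono (hd ▸ Set.subset_insert _ _) (hsc hz)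
  · rintro _ ⟨n, rfl⟩
    exact hgz n

end Norming

section WeakTopology

variable {E : Type*} [NormedAddCommGroup E] [NormedSpace ℝ E]

/-- Countably many functionals separating the points of the span of a norm-separable set make a
weakly compact subset of it metrizable. -/
theorem IsCompact.isSeqCompact_of_isSeparable {K : Set (WeakSpace ℝ E)} (hK : IsCompact K)
    (hs : IsSeparable ((toWeakSpace ℝ E).symm '' K)) : IsSeqCompact K := by
  obtain ⟨g, hg⟩ := (hs.span (R := ℝ)).exists_seq_dual_eq_zero (𝕜 := ℝ)
  have : CompactSpace K := isCompact_iff_compactSpace.mp hK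
  have : MetrizableSpace K :=
    Metric.PiNatEmbed.TopologicalSpace.MetrizableSpace.of_countable_separating (X := K)
      (fun n (a : K) => g n ((toWeakSpace ℝ E).symm a))
      (fun n => (WeakBilin.eval_continuous (topDualPairing ℝ E).flip (g n)).comp
        continuous_subtype_val)
      fun a b hab => by
        contrapose! hab
        refine Subtype.ext <| (toWeakSpace ℝ E).symm.injective <|
          sub_eq_zero.mp (hg _ (Submodule.sub_mem _ ?_ ?_) fun n => ?_)
        · exact Submodule.subset_span ⟨a, a.2, rfl⟩
        · exact Submodule.subset_span ⟨b, b.2, rfl⟩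
        · rw [map_sub, sub_eq_zero]
          exact hab n
  have hval : SeqContinuous fun a : K => (a : WeakSpace ℝ E) :=
    continuous_subtype_val.seqContinuous
  simpa using IsSeqCompact.range hval

/-- Eberlein–Šmulian, sequential half: the closed span of the sequence is norm-separable and
weakly closed, so the sequence lives in a weakly metrizable compact set. -/
theorem IsCompact.tendsto_subseq_weakSpace {K : Set (WeakSpace ℝ E)} (hK : IsCompact K)
    {x : ℕ → WeakSpace ℝ E} (hx : ∀ n, x n ∈ K) :
    ∃ a ∈ K, ∃ φ : ℕ → ℕ, StrictMono φ ∧ Tendsto (x ∘ φ) atTop (𝓝 a) := by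
  set S : Set E := closure (Submodule.span ℝ (Set.range ((toWeakSpace ℝ E).symm ∘ x)))
  have hS : IsSeparable S := isSeparable_closure.2 (Set.countable_range _).isSeparable.span
  have hS_closed : IsClosed (toWeakSpace ℝ E '' S) := by
    rw [(Submodule.span ℝ _).convex.toWeakSpace_closure ℝ]
    exact isClosed_closure
  have hxS (n : ℕ) : x n ∈ toWeakSpace ℝ E '' S :=
    ⟨_, subset_closure (Submodule.subset_span ⟨n, rfl⟩), by simp⟩
  have hKS : IsSeparable ((toWeakSpace ℝ E).symm '' (K ∩ toWeakSpace ℝ E '' S)) := by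
    refine hS.mono ?_
    rintro _ ⟨_, ⟨-, y, hy, rfl⟩, rfl⟩
    simpa using hy
  obtain ⟨a, ha, φ, hφ, hxa⟩ :=
    (hK.inter_right hS_closed).isSeqCompact_of_isSeparable hKS fun n => ⟨hx n, hxS n⟩
  exact ⟨a, ha.1, φ, hφ, hxa⟩

end WeakTopology

section WeaklyCompactOperators

variable {E F : Type*} [SeminormedAddCommGroup E] [NormedSpace ℝ E]
  [NormedAddCommGroup F] [NormedSpace ℝ F]

theorem IsWeaklyCompact.closedBall_zero (hF : IsWeaklyCompact (closedBall (0 : F) 1)) {r : ℝ}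
    (hr : 0 ≤ r) : IsWeaklyCompact (closedBall (0 : F) r) := by
  rw [IsWeaklyCompact, ← smul_unitClosedBall_of_nonneg hr, image_smul_set]
  exact hF.smul r

theorem isWeaklyCompactOp_of_isWeaklyCompact_closedBall
    (hF : IsWeaklyCompact (closedBall (0 : F) 1)) (T : E →L[ℝ] F) : IsWeaklyCompactOp T := by
  have hclosed : IsClosed (toWeakSpace ℝ F '' closedBall 0 ‖T‖) := by
    rw [← isClosed_closedBall.closure_eq, (convex_closedBall _ _).toWeakSpace_closure ℝ]
    exact isClosed_closure
  refine (hF.closedBall_zero (norm_nonneg T)).of_isClosed_subset isClosed_closure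
    (closure_minimal (Set.image_mono ?_) hclosed)
  rintro _ ⟨x, hx, rfl⟩
  rw [mem_closedBall_zero_iff] at hx ⊢
  simpa using T.le_opNorm_of_le hx

end WeaklyCompactOperators

section DunfordPettis

variable {E F : Type} [NormedAddCommGroup E] [NormedSpace ℝ E]
  [SeminormedAddCommGroup F] [NormedSpace ℝ F] [CompleteSpace F]

theorem HasDPP.tendsto_of_tendsto_weak (hE : HasDPP E) {T : E →L[ℝ] F}
    (hT : IsWeaklyCompactOp T) {x : ℕ → E} {y : E}
    (hx : Tendsto (fun n => toWeakSpace ℝ E (x n)) atTop (𝓝 (toWeakSpace ℝ E y))) :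
    Tendsto (fun n => T (x n)) atTop (𝓝 (T y)) := by
  have hnull : WeaklyNull fun n => x n - y := by
    simpa [WeaklyNull] using hx.sub_const (toWeakSpace ℝ E y)
  rw [tendsto_iff_norm_sub_tendsto_zero]
  simpa [map_sub] using hE F inferInstance inferInstance inferInstance T hT _ hnull

/-- The composition of weakly compact operators through a space with the Dunford–Pettis property
is compact, in sequential form. -/
theorem HasDPP.exists_subseq_tendsto_comp (hE : HasDPP E) {T : E →L[ℝ] F}
    (hT : IsWeaklyCompactOp T) {G : Type*} [SeminormedAddCommGroup G] [NormedSpace ℝ G]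
    {W : G →L[ℝ] E} (hW : IsWeaklyCompactOp W) {x : ℕ → G} (hx : ∀ n, ‖x n‖ ≤ 1) :
    ∃ z, ∃ φ : ℕ → ℕ, StrictMono φ ∧ Tendsto (fun n => T (W (x (φ n)))) atTop (𝓝 z) := by
  obtain ⟨a, -, φ, hφ, ha⟩ := hW.tendsto_subseq_weakSpace
    (x := fun n => toWeakSpace ℝ E (W (x n)))
    fun n => subset_closure ⟨W (x n), ⟨x n, by simpa using hx n, rfl⟩, rfl⟩
  exact ⟨T ((toWeakSpace ℝ E).symm a), φ, hφ, hE.tendsto_of_tendsto_weak hT ha⟩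

end DunfordPettis

theorem ContinuousLinearMap.norm_apply_sub_apply_le {𝕜 E F : Type*} [NontriviallyNormedField 𝕜]
    [SeminormedAddCommGroup E] [NormedSpace 𝕜 E] [SeminormedAddCommGroup F] [NormedSpace 𝕜 F]
    (A B : E →L[𝕜] F) (a b : E) :
    ‖A a - A b‖ ≤ ‖B a - B b‖ + ‖A - B‖ * (‖a‖ + ‖b‖) :=
  calc ‖A a - A b‖ = ‖(B a - B b) + ((A - B) a - (A - B) b)‖ := by
        congr 1; simp only [sub_apply]; abel
    _ ≤ ‖B a - B b‖ + (‖(A - B) a‖ + ‖(A - B) b‖) := norm_add_le_of_le le_rfl (norm_sub_le _ _)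
    _ ≤ ‖B a - B b‖ + (‖A - B‖ * ‖a‖ + ‖A - B‖ * ‖b‖) := by
        gcongr <;> exact (A - B).le_opNorm _
    _ = ‖B a - B b‖ + ‖A - B‖ * (‖a‖ + ‖b‖) := by ring

theorem Pairwise.not_tendsto_comp_of_le_dist {X : Type*} [PseudoMetricSpace X] {u : ℕ → X}
    {δ : ℝ} (hδ : 0 < δ) (hu : Pairwise fun i j => δ ≤ dist (u i) (u j)) {φ : ℕ → ℕ}
    (hφ : StrictMono φ) (z : X) : ¬ Tendsto (u ∘ φ) atTop (𝓝 z) := fun h => by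
  obtain ⟨N, hN⟩ := Metric.cauchySeq_iff.mp h.cauchySeq δ hδ
  exact (hu (hφ.injective.ne N.succ_ne_self.symm)).not_gt (hN N le_rfl (N + 1) N.le_succ)

theorem Submodule.exists_seq_norm_le_one_le_norm_sub_mk {E : Type*} [NormedAddCommGroup E]
    [NormedSpace ℝ E] {M : Submodule ℝ E} [IsClosed (M : Set E)]
    (hinf : ¬ FiniteDimensional ℝ (E ⧸ M)) :
    ∃ δ > 0, ∃ x : ℕ → E, (∀ n, ‖x n‖ ≤ 1) ∧ Pairwise fun i j =>
      δ ≤ ‖(Submodule.Quotient.mk (x i) - Submodule.Quotient.mk (x j) : E ⧸ M)‖ := by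
  obtain ⟨R, y, hR, hyR, hy⟩ := exists_seq_norm_le_one_le_norm_sub hinf
  choose x' hx'y hx' using fun n => Submodule.Quotient.norm_mk_lt (y n) one_pos
  have hR1 : 0 < R + 1 := by linarith
  refine ⟨(R + 1)⁻¹, inv_pos.mpr hR1, fun n => (R + 1)⁻¹ • x' n, fun n => ?_, fun i j hij => ?_⟩
  · rw [norm_smul, Real.norm_of_nonneg (inv_nonneg.mpr hR1.le), inv_mul_le_one₀ hR1]
    linarith [hx' n, hyR n]
  · dsimp only
    rw [Submodule.Quotient.mk_smul, Submodule.Quotient.mk_smul, hx'y, hx'y, ← smul_sub,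
      norm_smul, Real.norm_of_nonneg (inv_nonneg.mpr hR1.le)]
    exact le_mul_of_one_le_right (inv_nonneg.mpr hR1.le) (hy hij)

/-- Let `E` be a Banach space with the Dunford–Pettis property and `M ⊆ E` a closed
subspace with `E/M` infinite-dimensional and reflexive.  Then there is no sequence `(V_n)`
of weakly compact operators on `E` with `‖Q - Q ∘ V_n‖ → 0`, where `Q` is the quotient
map; in particular `E` fails the inner W.A.P. -/
theorem stmt_10 {E : Type} [NormedAddCommGroup E] [NormedSpace ℝ E] [CompleteSpace E]
    (hDPP : HasDPP E)
    (M : Submodule ℝ E) (hMclosed : IsClosed (M : Set E))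
    (hinf : ¬ FiniteDimensional ℝ (E ⧸ M))
    (hrefl : IsWeaklyCompact (Metric.closedBall (0 : E ⧸ M) 1))
    (Q : E →L[ℝ] E ⧸ M) (hQ : ∀ x : E, Q x = Submodule.Quotient.mk x) :
    ¬ ∃ V : ℕ → E →L[ℝ] E, (∀ n, IsWeaklyCompactOp (V n)) ∧
      Tendsto (fun n => ‖Q - Q.comp (V n)‖) atTop (nhds 0) := by
  rintro ⟨V, hV, hlim⟩
  have : IsClosed (M : Set E) := hMclosed
  obtain ⟨δ, hδ, x, hx, hsep⟩ := Submodule.exists_seq_norm_le_one_le_norm_sub_mk hinf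
  obtain ⟨n, hn⟩ := (hlim.eventually_lt_const (by positivity : 0 < δ / 4)).exists
  obtain ⟨z, φ, hφ, hz⟩ := hDPP.exists_subseq_tendsto_comp
    (isWeaklyCompactOp_of_isWeaklyCompact_closedBall hrefl Q) (hV n) hx
  have hsepV : Pairwise fun i j => δ / 2 ≤ dist (Q (V n (x i))) (Q (V n (x j))) := by
    intro i j hij
    have hQx := Q.norm_apply_sub_apply_le (Q.comp (V n)) (x i) (x j)
    have hQsep : δ ≤ ‖Q (x i) - Q (x j)‖ := by simpa only [hQ] using hsep hij
    rw [dist_eq_norm]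
    simp only [ContinuousLinearMap.comp_apply] at hQx
    have hsmall : ‖Q - Q.comp (V n)‖ * (‖x i‖ + ‖x j‖) ≤ δ / 4 * 2 :=
      mul_le_mul hn.le (by linarith [hx i, hx j]) (by positivity) (by positivity)
    linarith
  exact hsepV.not_tendsto_comp_of_le_dist (half_pos hδ) hφ z hz
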